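/- Let U ⊆ ℝ⁴ be open, let Φ : U → ℝ and H, v : U → ℝ³ be twice continuously differentiable, and assume ∂₁Φ ≠ 0 on U. If the induction equation ℍ(H, v, Φ) := (∂ₜ^Φ + v · ∇^Φ)H − (H · ∇^Φ)v + H(∇^Φ · v) = 0 holds on U, then (∂ₜ^Φ + v · ∇^Φ)(∇^Φ · H) + (∇^Φ · v)(∇^Φ · H) = 0 on U. -/

import Mathlib

/-- Partial derivative `∂ᵢ f` on `ℝ⁴` (coordinates `(t, x₁, x₂, x₃)` indexed by `Fin 4`,
with `∂₀ = ∂ₜ`). -/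
noncomputable def pd (i : Fin 4) (f : (Fin 4 → ℝ) → ℝ) (x : Fin 4 → ℝ) : ℝ :=
  fderiv ℝ f x (Pi.single i 1)

/-- Transformed derivative `∂ᵢ^Φ`: `∂ₜ^Φ f = ∂ₜf − (∂ₜΦ/∂₁Φ)∂₁f`,
`∂₁^Φ f = ∂₁f/∂₁Φ`, and `∂ⱼ^Φ f = ∂ⱼf − (∂ⱼΦ/∂₁Φ)∂₁f` for `j = 2, 3`. -/
noncomputable def pdPhi (Φ : (Fin 4 → ℝ) → ℝ) (i : Fin 4) (f : (Fin 4 → ℝ) → ℝ)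
    (x : Fin 4 → ℝ) : ℝ :=
  if i = 1 then pd 1 f x / pd 1 Φ x else pd i f x - pd i Φ x / pd 1 Φ x * pd 1 f x

/-- Transformed divergence `∇^Φ · u = ∂₁^Φu₁ + ∂₂^Φu₂ + ∂₃^Φu₃`. -/
noncomputable def divPhi (Φ : (Fin 4 → ℝ) → ℝ) (u : (Fin 4 → ℝ) → Fin 3 → ℝ)
    (x : Fin 4 → ℝ) : ℝ :=
  pdPhi Φ 1 (fun y => u y 0) x + pdPhi Φ 2 (fun y => u y 1) x + pdPhi Φ 3 (fun y => u y 2) x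

/-!
The operators `∂ₖ^Φ` are derivations and, for `C²` functions, commute pairwise. Taking the
transformed divergence of `ℍ(H, v, Φ)`, the two cross terms `∂ᵢ^Φvⱼ ∂ⱼ^ΦHᵢ` and `∂ᵢ^ΦHⱼ ∂ⱼ^Φvᵢ`
cancel after swapping `i` and `j`, as do `Hⱼ ∂ᵢ^Φ∂ⱼ^Φvᵢ` and `Hᵢ ∂ᵢ^Φ(∇^Φ · v)`; what remains is
exactly the left side of the transport equation. Since `ℍ` vanishes on the open set `U`, so does
its divergence.
-/

open Filter Topology

section Derivation

variable {f g : (Fin 4 → ℝ) → ℝ} {x : Fin 4 → ℝ}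

lemma differentiableAt_pd (hf : ContDiffAt ℝ 2 f x) (k : Fin 4) :
    DifferentiableAt ℝ (pd k f) x :=
  ((hf.fderiv_right (m := 1) (by norm_num)).differentiableAt (by norm_num)).clm_apply
    (differentiableAt_const _)

lemma pd_comm (hf : ContDiffAt ℝ 2 f x) (k j : Fin 4) :
    pd k (pd j f) x = pd j (pd k f) x := by
  have hdf : DifferentiableAt ℝ (fderiv ℝ f) x :=
    (hf.fderiv_right (m := 1) (by norm_num)).differentiableAt (by norm_num)
  have hpd : ∀ a b : Fin 4, pd a (pd b f) x
      = fderiv ℝ (fderiv ℝ f) x (Pi.single a 1) (Pi.single b 1) := fun a b => by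
    rw [show pd b f = fun y => fderiv ℝ f y (Pi.single b 1) from rfl]
    simp [pd, fderiv_clm_apply hdf (differentiableAt_const _)]
  rw [hpd, hpd]
  exact hf.isSymmSndFDerivAt (by simp) _ _

lemma pd_add (k : Fin 4) (hf : DifferentiableAt ℝ f x) (hg : DifferentiableAt ℝ g x) :
    pd k (fun y => f y + g y) x = pd k f x + pd k g x := by
  simp [pd, fderiv_fun_add hf hg]

lemma pd_sub (k : Fin 4) (hf : DifferentiableAt ℝ f x) (hg : DifferentiableAt ℝ g x) :
    pd k (fun y => f y - g y) x = pd k f x - pd k g x := by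
  simp [pd, fderiv_fun_sub hf hg]

lemma pd_mul (k : Fin 4) (hf : DifferentiableAt ℝ f x) (hg : DifferentiableAt ℝ g x) :
    pd k (fun y => f y * g y) x = pd k f x * g x + f x * pd k g x := by
  simp only [pd, fderiv_fun_mul hf hg, add_apply, smul_apply, smul_eq_mul]
  ring

lemma pd_sum {ι : Type*} (s : Finset ι) {F : ι → (Fin 4 → ℝ) → ℝ} (k : Fin 4)
    (hF : ∀ i ∈ s, DifferentiableAt ℝ (F i) x) :
    pd k (fun y => ∑ i ∈ s, F i y) x = ∑ i ∈ s, pd k (F i) x := by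
  simp [pd, fderiv_fun_sum hF]

lemma pd_congr (k : Fin 4) (h : f =ᶠ[𝓝 x] g) : pd k f x = pd k g x := by
  simp only [pd, h.fderiv_eq]

lemma pd_const (k : Fin 4) (c : ℝ) : pd k (fun _ => c) x = 0 := by
  simp [pd]

end Derivation

noncomputable def shearPd (ρ : Fin 4 → (Fin 4 → ℝ) → ℝ) (k : Fin 4) (f : (Fin 4 → ℝ) → ℝ) :
    (Fin 4 → ℝ) → ℝ :=
  fun x => pd k f x - ρ k x * pd 1 f x

section Shear

variable {ρ : Fin 4 → (Fin 4 → ℝ) → ℝ} {f : (Fin 4 → ℝ) → ℝ} {x : Fin 4 → ℝ}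

lemma shearPd_shearPd {a b : Fin 4} (hf : ContDiffAt ℝ 2 f x)
    (hb : DifferentiableAt ℝ (ρ b) x) :
    shearPd ρ a (shearPd ρ b f) x
      = pd a (pd b f) x - pd a (ρ b) x * pd 1 f x - ρ b x * pd a (pd 1 f) x
        - ρ a x * (pd 1 (pd b f) x - pd 1 (ρ b) x * pd 1 f x - ρ b x * pd 1 (pd 1 f) x) := by
  have hmul := hb.fun_mul (differentiableAt_pd hf 1)
  unfold shearPd
  rw [pd_sub _ (differentiableAt_pd hf b) hmul, pd_sub _ (differentiableAt_pd hf b) hmul,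
    pd_mul _ hb (differentiableAt_pd hf 1), pd_mul _ hb (differentiableAt_pd hf 1)]
  ring

lemma shearPd_comm_sub (hf : ContDiffAt ℝ 2 f x) {a b : Fin 4}
    (ha : DifferentiableAt ℝ (ρ a) x) (hb : DifferentiableAt ℝ (ρ b) x) :
    shearPd ρ a (shearPd ρ b f) x - shearPd ρ b (shearPd ρ a f) x
      = (shearPd ρ b (ρ a) x - shearPd ρ a (ρ b) x) * pd 1 f x := by
  rw [shearPd_shearPd hf hb, shearPd_shearPd hf ha, pd_comm hf a b, pd_comm hf 1 a,
    pd_comm hf 1 b]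
  unfold shearPd
  ring

end Shear

/-- Chosen so that `pdPhi Φ = shearPd (phiCoeff Φ)` holds everywhere: where `∂₁Φ = 0`, both
sides of `pdPhi Φ 1` vanish through `0⁻¹ = 0`. -/
noncomputable def phiCoeff (Φ : (Fin 4 → ℝ) → ℝ) (k : Fin 4) : (Fin 4 → ℝ) → ℝ :=
  if k = 1 then fun x => 1 - (pd 1 Φ x)⁻¹ else fun x => pd k Φ x / pd 1 Φ x

lemma pdPhi_eq_shearPd (Φ : (Fin 4 → ℝ) → ℝ) : pdPhi Φ = shearPd (phiCoeff Φ) := by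
  funext k f x
  unfold pdPhi shearPd phiCoeff
  split_ifs with hk
  · subst hk
    ring
  · rfl

section PdPhi

variable {Φ f g : (Fin 4 → ℝ) → ℝ} {x : Fin 4 → ℝ}

lemma differentiableAt_phiCoeff (hΦ : ContDiffAt ℝ 2 Φ x) (h1 : pd 1 Φ x ≠ 0) (k : Fin 4) :
    DifferentiableAt ℝ (phiCoeff Φ k) x := by
  have hpd := differentiableAt_pd hΦ
  unfold phiCoeff
  split_ifs
  · exact (differentiableAt_const 1).sub ((hpd 1).inv h1)
  · simpa only [div_eq_mul_inv] using (hpd k).fun_mul ((hpd 1).fun_inv h1)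

lemma differentiableAt_pdPhi (hΦ : ContDiffAt ℝ 2 Φ x) (h1 : pd 1 Φ x ≠ 0)
    (hf : ContDiffAt ℝ 2 f x) (k : Fin 4) : DifferentiableAt ℝ (pdPhi Φ k f) x := by
  rw [pdPhi_eq_shearPd]
  exact (differentiableAt_pd hf k).sub
    ((differentiableAt_phiCoeff hΦ h1 k).mul (differentiableAt_pd hf 1))

lemma pdPhi_add (k : Fin 4) (hf : DifferentiableAt ℝ f x) (hg : DifferentiableAt ℝ g x) :
    pdPhi Φ k (fun y => f y + g y) x = pdPhi Φ k f x + pdPhi Φ k g x := by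
  simp only [pdPhi_eq_shearPd, shearPd, pd_add _ hf hg]
  ring

lemma pdPhi_sub (k : Fin 4) (hf : DifferentiableAt ℝ f x) (hg : DifferentiableAt ℝ g x) :
    pdPhi Φ k (fun y => f y - g y) x = pdPhi Φ k f x - pdPhi Φ k g x := by
  simp only [pdPhi_eq_shearPd, shearPd, pd_sub _ hf hg]
  ring

lemma pdPhi_mul (k : Fin 4) (hf : DifferentiableAt ℝ f x) (hg : DifferentiableAt ℝ g x) :
    pdPhi Φ k (fun y => f y * g y) x = pdPhi Φ k f x * g x + f x * pdPhi Φ k g x := by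
  simp only [pdPhi_eq_shearPd, shearPd, pd_mul _ hf hg]
  ring

lemma pdPhi_sum {ι : Type*} (s : Finset ι) {F : ι → (Fin 4 → ℝ) → ℝ} (k : Fin 4)
    (hF : ∀ i ∈ s, DifferentiableAt ℝ (F i) x) :
    pdPhi Φ k (fun y => ∑ i ∈ s, F i y) x = ∑ i ∈ s, pdPhi Φ k (F i) x := by
  simp only [pdPhi_eq_shearPd, shearPd, pd_sum s _ hF, Finset.mul_sum, Finset.sum_sub_distrib]

lemma pdPhi_congr (k : Fin 4) (h : f =ᶠ[𝓝 x] g) : pdPhi Φ k f x = pdPhi Φ k g x := by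
  simp only [pdPhi, pd_congr _ h]

lemma pdPhi_const (k : Fin 4) (c : ℝ) : pdPhi Φ k (fun _ => c) x = 0 := by
  simp [pdPhi, pd_const]

lemma pdPhi_self (h1 : pd 1 Φ x ≠ 0) (k : Fin 4) :
    pdPhi Φ k Φ x = if k = 1 then 1 else 0 := by
  unfold pdPhi
  split_ifs
  · exact div_self h1
  · field_simp
    ring

lemma pdPhi_pdPhi_self (hΦ : ContDiffAt ℝ 2 Φ x) (h1 : pd 1 Φ x ≠ 0) (a b : Fin 4) :
    pdPhi Φ a (pdPhi Φ b Φ) x = 0 := by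
  have hne : ∀ᶠ y in 𝓝 x, pd 1 Φ y ≠ 0 :=
    (differentiableAt_pd hΦ 1).continuousAt.eventually_ne h1
  rw [pdPhi_congr a (hne.mono fun y hy => pdPhi_self hy b), pdPhi_const]

/-- By `shearPd_comm_sub`, the commutator `[∂ₐ^Φ, ∂_b^Φ]` is a multiple `c ∂₁` of `∂₁`;
it annihilates `Φ` because every `∂ₖ^Φ Φ` is locally constant, and `∂₁Φ ≠ 0` forces `c = 0`. -/
lemma pdPhi_comm (hΦ : ContDiffAt ℝ 2 Φ x) (h1 : pd 1 Φ x ≠ 0) (hf : ContDiffAt ℝ 2 f x)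
    (a b : Fin 4) : pdPhi Φ a (pdPhi Φ b f) x = pdPhi Φ b (pdPhi Φ a f) x := by
  have hρ := differentiableAt_phiCoeff hΦ h1
  have hΦcomm := shearPd_comm_sub hΦ (hρ a) (hρ b)
  have hfcomm := shearPd_comm_sub hf (hρ a) (hρ b)
  rw [← pdPhi_eq_shearPd, pdPhi_pdPhi_self hΦ h1, pdPhi_pdPhi_self hΦ h1, sub_self,
    eq_comm, mul_eq_zero, or_iff_left h1] at hΦcomm
  rwa [← pdPhi_eq_shearPd, hΦcomm, zero_mul, sub_eq_zero] at hfcomm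

end PdPhi

section Divergence

variable {Φ : (Fin 4 → ℝ) → ℝ} {u : (Fin 4 → ℝ) → Fin 3 → ℝ} {x : Fin 4 → ℝ}

lemma divPhi_eq_sum (Φ : (Fin 4 → ℝ) → ℝ) (u : (Fin 4 → ℝ) → Fin 3 → ℝ) (x : Fin 4 → ℝ) :
    divPhi Φ u x = ∑ j : Fin 3, pdPhi Φ j.succ (fun y => u y j) x := by
  rw [Fin.sum_univ_three]
  rfl

lemma differentiableAt_divPhi (hΦ : ContDiffAt ℝ 2 Φ x) (h1 : pd 1 Φ x ≠ 0)
    (hu : ContDiffAt ℝ 2 u x) : DifferentiableAt ℝ (divPhi Φ u) x := by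
  rw [funext (divPhi_eq_sum Φ u)]
  exact DifferentiableAt.fun_sum fun j _ =>
    differentiableAt_pdPhi hΦ h1 (contDiffAt_pi.mp hu j) _

lemma pdPhi_divPhi (hΦ : ContDiffAt ℝ 2 Φ x) (h1 : pd 1 Φ x ≠ 0) (hu : ContDiffAt ℝ 2 u x)
    (k : Fin 4) :
    pdPhi Φ k (divPhi Φ u) x = ∑ j : Fin 3, pdPhi Φ j.succ (pdPhi Φ k fun y => u y j) x := by
  rw [funext (divPhi_eq_sum Φ u),
    pdPhi_sum _ _ fun j _ => differentiableAt_pdPhi hΦ h1 (contDiffAt_pi.mp hu j) _]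
  exact Finset.sum_congr rfl fun j _ => pdPhi_comm hΦ h1 (contDiffAt_pi.mp hu j) k j.succ

lemma divPhi_eq_zero_of_eventuallyEq (h : u =ᶠ[𝓝 x] 0) : divPhi Φ u x = 0 := by
  rw [divPhi_eq_sum]
  refine Finset.sum_eq_zero fun j _ => ?_
  rw [pdPhi_congr (g := fun _ => 0) _ (h.mono fun y hy => congrFun hy j), pdPhi_const]

end Divergence

noncomputable def materialDeriv (Φ : (Fin 4 → ℝ) → ℝ) (v : (Fin 4 → ℝ) → Fin 3 → ℝ)
    (g : (Fin 4 → ℝ) → ℝ) (x : Fin 4 → ℝ) : ℝ :=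
  pdPhi Φ 0 g x + ∑ j : Fin 3, v x j * pdPhi Φ j.succ g x

noncomputable def magneticInduction (Φ : (Fin 4 → ℝ) → ℝ) (H v : (Fin 4 → ℝ) → Fin 3 → ℝ)
    (x : Fin 4 → ℝ) (i : Fin 3) : ℝ :=
  materialDeriv Φ v (fun y => H y i) x
    - ∑ j : Fin 3, H x j * pdPhi Φ j.succ (fun y => v y i) x + H x i * divPhi Φ v x

section Induction

variable {Φ : (Fin 4 → ℝ) → ℝ} {H v : (Fin 4 → ℝ) → Fin 3 → ℝ} {x : Fin 4 → ℝ}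

lemma pdPhi_magneticInduction (hΦ : ContDiffAt ℝ 2 Φ x) (h1 : pd 1 Φ x ≠ 0)
    (hH : ContDiffAt ℝ 2 H x) (hv : ContDiffAt ℝ 2 v x) (k : Fin 4) (i : Fin 3) :
    pdPhi Φ k (fun y => magneticInduction Φ H v y i) x
      = pdPhi Φ k (pdPhi Φ 0 fun y => H y i) x
        + ∑ j : Fin 3, (pdPhi Φ k (fun y => v y j) x * pdPhi Φ j.succ (fun y => H y i) x
          + v x j * pdPhi Φ k (pdPhi Φ j.succ fun y => H y i) x)
        - ∑ j : Fin 3, (pdPhi Φ k (fun y => H y j) x * pdPhi Φ j.succ (fun y => v y i) x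
          + H x j * pdPhi Φ k (pdPhi Φ j.succ fun y => v y i) x)
        + (pdPhi Φ k (fun y => H y i) x * divPhi Φ v x
          + H x i * pdPhi Φ k (divPhi Φ v) x) := by
  have hHj j : DifferentiableAt ℝ (fun y => H y j) x :=
    (contDiffAt_pi.mp hH j).differentiableAt (by norm_num)
  have hvj j : DifferentiableAt ℝ (fun y => v y j) x :=
    (contDiffAt_pi.mp hv j).differentiableAt (by norm_num)
  have hDH l : DifferentiableAt ℝ (pdPhi Φ l fun y => H y i) x :=
    differentiableAt_pdPhi hΦ h1 (contDiffAt_pi.mp hH i) l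
  have hDv l : DifferentiableAt ℝ (pdPhi Φ l fun y => v y i) x :=
    differentiableAt_pdPhi hΦ h1 (contDiffAt_pi.mp hv i) l
  have hdiv := differentiableAt_divPhi hΦ h1 hv
  unfold magneticInduction materialDeriv
  rw [pdPhi_add _ (by fun_prop) (by fun_prop), pdPhi_sub _ (by fun_prop) (by fun_prop),
    pdPhi_add _ (by fun_prop) (by fun_prop), pdPhi_sum _ _ (by fun_prop),
    pdPhi_sum _ _ (by fun_prop), pdPhi_mul _ (hHj i) hdiv]
  simp only [pdPhi_mul _ (hvj _) (hDH _), pdPhi_mul _ (hHj _) (hDv _)]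

lemma divPhi_magneticInduction (hΦ : ContDiffAt ℝ 2 Φ x) (h1 : pd 1 Φ x ≠ 0)
    (hH : ContDiffAt ℝ 2 H x) (hv : ContDiffAt ℝ 2 v x) :
    divPhi Φ (magneticInduction Φ H v) x
      = materialDeriv Φ v (divPhi Φ H) x + divPhi Φ v x * divPhi Φ H x := by
  have htime : ∑ i : Fin 3, pdPhi Φ i.succ (pdPhi Φ 0 fun y => H y i) x
      = pdPhi Φ 0 (divPhi Φ H) x :=
    (pdPhi_divPhi hΦ h1 hH 0).symm
  have hadvect : ∑ i : Fin 3, ∑ j : Fin 3, v x j * pdPhi Φ i.succ (pdPhi Φ j.succ fun y => H y i) x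
      = ∑ j : Fin 3, v x j * pdPhi Φ j.succ (divPhi Φ H) x := by
    simp only [pdPhi_divPhi hΦ h1 hH, Finset.mul_sum]
    exact Finset.sum_comm
  have hcross : ∑ i : Fin 3, ∑ j : Fin 3,
        pdPhi Φ i.succ (fun y => H y j) x * pdPhi Φ j.succ (fun y => v y i) x
      = ∑ i : Fin 3, ∑ j : Fin 3,
        pdPhi Φ i.succ (fun y => v y j) x * pdPhi Φ j.succ (fun y => H y i) x := by
    rw [Finset.sum_comm]
    exact Finset.sum_congr rfl fun i _ => Finset.sum_congr rfl fun j _ => mul_comm _ _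
  have hstretch : ∑ i : Fin 3, ∑ j : Fin 3, H x j * pdPhi Φ i.succ (pdPhi Φ j.succ fun y => v y i) x
      = ∑ i : Fin 3, H x i * pdPhi Φ i.succ (divPhi Φ v) x := by
    simp only [pdPhi_divPhi hΦ h1 hv, Finset.mul_sum]
    exact Finset.sum_comm
  have hdivdiv : ∑ i : Fin 3, pdPhi Φ i.succ (fun y => H y i) x * divPhi Φ v x
      = divPhi Φ v x * divPhi Φ H x := by
    rw [← Finset.sum_mul, ← divPhi_eq_sum, mul_comm]
  rw [divPhi_eq_sum]
  simp only [pdPhi_magneticInduction hΦ h1 hH hv, Finset.sum_add_distrib, Finset.sum_sub_distrib]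
  rw [materialDeriv]
  linear_combination htime + hadvect - hcross - hstretch + hdivdiv

end Induction

/-- If the induction equation
`ℍ(H, v, Φ) = (∂ₜ^Φ + v·∇^Φ)H − (H·∇^Φ)v + H(∇^Φ·v) = 0` of ideal relativistic MHD holds
on an open set `U` (with `Φ, H, v` twice continuously differentiable and `∂₁Φ ≠ 0` on `U`),
then the divergence satisfies the transport equation
`(∂ₜ^Φ + v·∇^Φ)(∇^Φ·H) + (∇^Φ·v)(∇^Φ·H) = 0` on `U`. -/
theorem stmt_12 (U : Set (Fin 4 → ℝ)) (hU : IsOpen U)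
    (Φ : (Fin 4 → ℝ) → ℝ) (H v : (Fin 4 → ℝ) → Fin 3 → ℝ)
    (hΦ : ContDiffOn ℝ 2 Φ U) (hH : ContDiffOn ℝ 2 H U) (hv : ContDiffOn ℝ 2 v U)
    (hΦ1 : ∀ x ∈ U, pd 1 Φ x ≠ 0)
    (heq : ∀ x ∈ U, ∀ i : Fin 3,
      pdPhi Φ 0 (fun y => H y i) x
        + (∑ j : Fin 3, v x j * pdPhi Φ j.succ (fun y => H y i) x)
        - (∑ j : Fin 3, H x j * pdPhi Φ j.succ (fun y => v y i) x)
        + H x i * divPhi Φ v x = 0) :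
    ∀ x ∈ U,
      pdPhi Φ 0 (divPhi Φ H) x
        + (∑ j : Fin 3, v x j * pdPhi Φ j.succ (divPhi Φ H) x)
        + divPhi Φ v x * divPhi Φ H x = 0 := by
  intro x hx
  have hU_nhds := hU.mem_nhds hx
  have hinduction : magneticInduction Φ H v =ᶠ[𝓝 x] 0 := by
    filter_upwards [hU_nhds] with y hy
    exact funext (heq y hy)
  rw [← divPhi_eq_zero_of_eventuallyEq (Φ := Φ) hinduction]
  exact (divPhi_magneticInduction (hΦ.contDiffAt hU_nhds) (hΦ1 x hx) (hH.contDiffAt hU_nhds)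
    (hv.contDiffAt hU_nhds)).symm
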